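/- arXiv:2304.05275 — 7 statements merged into one kernel-verified Lean document; each statement's English description precedes it below -/
import Mathlib

section
/- Let 0 < σ < n and let (K_n)_S be the complete graph K_n with self-loops at a set S of σ vertices. Then the spectrum of (K_n)_S consists of: (n−1+√((n−1)²+4σ))/2 with multiplicity 1, 0 with multiplicity σ−1, −1 with multiplicity n−σ−1, and (n−1−√((n−1)²+4σ))/2 with multiplicity 1. -/
/-!
For `x ∉ {0, -1}`, `x • 1 - A` is the diagonal matrix `D` with entries `x` on `S` and `x + 1` off
`S`, minus the all-ones matrix. The matrix determinant lemma gives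
`det (x • 1 - A) = det D * (1 - ∑ i, (D i i)⁻¹) = x ^ (σ - 1) * (x + 1) ^ (n - σ - 1) * (x ^ 2 - (n - 1) * x - σ)`.
Two polynomials agreeing off a finite set are equal, so this is the characteristic polynomial of
`A`, whose roots are the eigenvalues.
-/

open Matrix Finset

/-- Adjacency matrix of the complete graph `K_n`. -/
def adjKn (n : ℕ) : Matrix (Fin n) (Fin n) ℝ :=
  Matrix.of fun i j => if i = j then 0 else 1

/-- The diagonal 0-1 matrix indicating the loop vertices in `S`. -/
def loopMat (n : ℕ) (S : Finset (Fin n)) : Matrix (Fin n) (Fin n) ℝ :=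
  Matrix.of fun i j => if i = j ∧ i ∈ S then 1 else 0

open Polynomial

theorem det_diagonal_sub_ones {ι K : Type*} [Fintype ι] [DecidableEq ι] [Field K]
    {d : ι → K} (hd : ∀ i, d i ≠ 0) :
    (diagonal d - of fun _ _ => (1 : K)).det = (∏ i, d i) * (1 - ∑ i, (d i)⁻¹) := by
  have hfactor : diagonal d - of (fun _ _ => (1 : K)) =
      diagonal d * (1 + replicateCol Unit (fun i => -(d i)⁻¹) *
        replicateRow Unit (fun _ : ι => (1 : K)) : Matrix ι ι K) := by
    rw [Matrix.mul_add, Matrix.mul_one]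
    ext i j
    rw [Matrix.add_apply, diagonal_mul, mul_apply]
    simp only [Matrix.sub_apply, diagonal_apply, of_apply, replicateCol_apply, replicateRow_apply,
      Fintype.sum_unique]
    split_ifs <;> field_simp [hd i] <;> ring
  rw [hfactor, det_mul, det_diagonal, det_one_add_replicateCol_mul_replicateRow]
  simp [dotProduct, sub_eq_add_neg]

theorem scalar_sub_adjKn_add_loopMat (n : ℕ) (S : Finset (Fin n)) (x : ℝ) :
    scalar (Fin n) x - (adjKn n + loopMat n S) =
      diagonal (fun i => if i ∈ S then x else x + 1) - of fun _ _ => 1 := by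
  ext i j
  obtain rfl | hij := eq_or_ne i j
  · by_cases hi : i ∈ S <;> simp [adjKn, loopMat, hi]
  · simp [adjKn, loopMat, hij]

theorem eval_charpoly_adjKn_add_loopMat {n : ℕ} {S : Finset (Fin n)}
    (h0 : 0 < S.card) (h1 : S.card < n) {x : ℝ} (hx0 : x ≠ 0) (hx1 : x + 1 ≠ 0) :
    (adjKn n + loopMat n S).charpoly.eval x =
      x ^ (S.card - 1) * (x + 1) ^ (n - S.card - 1) * (x ^ 2 - (n - 1) * x - S.card) := by
  have hd : ∀ i, (if i ∈ S then x else x + 1) ≠ 0 := fun i => by split_ifs <;> assumption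
  rw [eval_charpoly, scalar_sub_adjKn_add_loopMat, det_diagonal_sub_ones hd]
  simp only [prod_ite, subset_univ, filter_mem_eq_of_subset, prod_const, filter_not, card_sdiff,
    card_univ, Fintype.card_fin, inter_univ, apply_ite Inv.inv, sum_ite, sum_const, nsmul_eq_mul]
  obtain ⟨k, hk⟩ := Nat.exists_eq_add_one_of_ne_zero h0.ne'
  obtain ⟨m, hm⟩ := Nat.exists_eq_add_one_of_ne_zero (Nat.sub_pos_of_lt h1).ne'
  have hn : (n : ℝ) = k + 1 + (m + 1) := by exact_mod_cast (by omega : n = k + 1 + (m + 1))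
  rw [hm, hk, hn]
  push_cast
  field_simp
  ring

theorem charpoly_adjKn_add_loopMat {n : ℕ} {S : Finset (Fin n)}
    (h0 : 0 < S.card) (h1 : S.card < n) :
    (adjKn n + loopMat n S).charpoly =
      X ^ (S.card - 1) * (X + C 1) ^ (n - S.card - 1) *
        (X ^ 2 - C ((n : ℝ) - 1) * X - C (S.card : ℝ)) := by
  apply eq_of_infinite_eval_eq
  refine Set.Infinite.mono (s := {0, -1}ᶜ) (fun x hx => ?_)
    ((Set.finite_singleton _).insert 0).infinite_compl
  simp only [Set.mem_compl_iff, Set.mem_insert_iff, Set.mem_singleton_iff, not_or] at hx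
  have hx1 : x + 1 ≠ 0 := fun h => hx.2 (eq_neg_of_add_eq_zero_left h)
  simp [eval_charpoly_adjKn_add_loopMat h0 h1 hx.1 hx1]

theorem roots_X_sq_sub_C_mul_X_sub_C {b c : ℝ} (h : 0 ≤ b ^ 2 + 4 * c) :
    (X ^ 2 - C b * X - C c).roots =
      {(b + √(b ^ 2 + 4 * c)) / 2, (b - √(b ^ 2 + 4 * c)) / 2} := by
  have hform : X ^ 2 - C b * X - C c = C 1 * X ^ 2 + C (-b) * X + C (-c) := by
    simp only [map_one, one_mul, map_neg]
    ring
  rw [hform, roots_quadratic_eq_pair_iff_of_ne_zero one_ne_zero]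
  constructor
  · ring
  · nlinarith [Real.sq_sqrt h]

theorem roots_charpoly_adjKn_add_loopMat {n : ℕ} {S : Finset (Fin n)}
    (h0 : 0 < S.card) (h1 : S.card < n) :
    (adjKn n + loopMat n S).charpoly.roots =
      Multiset.replicate (S.card - 1) 0 + Multiset.replicate (n - S.card - 1) (-1) +
        {((n : ℝ) - 1 + √(((n : ℝ) - 1) ^ 2 + 4 * S.card)) / 2,
          ((n : ℝ) - 1 - √(((n : ℝ) - 1) ^ 2 + 4 * S.card)) / 2} := by
  have hmonic : (X ^ (S.card - 1) * (X + C 1) ^ (n - S.card - 1) *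
      (X ^ 2 - C ((n : ℝ) - 1) * X - C (S.card : ℝ))).Monic := by monicity!
  rw [charpoly_adjKn_add_loopMat h0 h1, roots_mul hmonic.ne_zero, roots_mul, roots_X_pow,
    roots_pow, roots_X_add_C, roots_X_sq_sub_C_mul_X_sub_C (by positivity)]
  · simp [Multiset.nsmul_singleton]
  · exact ((monic_X_pow _).mul ((monic_X_add_C 1).pow _)).ne_zero

/-- spectrum of `(K_n)_S` for `0 < σ < n`. -/
theorem spec_Kn_some_loops (n : ℕ) (S : Finset (Fin n))
    (h0 : 0 < S.card) (h1 : S.card < n)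
    (hA : (adjKn n + loopMat n S).IsHermitian) :
    Finset.univ.val.map hA.eigenvalues =
      Multiset.replicate 1 (((n : ℝ) - 1 + Real.sqrt (((n : ℝ) - 1) ^ 2 + 4 * S.card)) / 2) +
      Multiset.replicate (S.card - 1) (0 : ℝ) +
      Multiset.replicate (n - S.card - 1) (-1 : ℝ) +
      Multiset.replicate 1 (((n : ℝ) - 1 - Real.sqrt (((n : ℝ) - 1) ^ 2 + 4 * S.card)) / 2) := by
  have h := hA.roots_charpoly_eq_eigenvalues
  rw [RCLike.ofReal_real_eq_id, Function.id_comp, roots_charpoly_adjKn_add_loopMat h0 h1] at h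
  rw [← h]
  simp only [Multiset.replicate_one, Multiset.insert_eq_cons, ← Multiset.singleton_add]
  abel
end

section
/- Let G = K_{m,n} be the complete bipartite graph with parts M of size m and N of size n, and let S ⊆ V(G) have σ_M loops in M and σ_N loops in N. Then the sum of the cubes of the eigenvalues of the self-loop graph G_S equals 3(mσ_N + nσ_M) + σ, where σ = σ_M + σ_N. -/
open Matrix Finset

/-- Adjacency matrix of the complete bipartite graph `K_{m,n}` with parts `Fin m` and `Fin n`. -/
def adjKmn (m n : ℕ) : Matrix (Fin m ⊕ Fin n) (Fin m ⊕ Fin n) ℝ :=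
  Matrix.of fun i j =>
    match i, j with
    | Sum.inl _, Sum.inr _ => 1
    | Sum.inr _, Sum.inl _ => 1
    | _, _ => 0

/-- The diagonal 0-1 matrix indicating loops at `SM ⊆ M` and `SN ⊆ N`. -/
def loopMatKmn (m n : ℕ) (SM : Finset (Fin m)) (SN : Finset (Fin n)) :
    Matrix (Fin m ⊕ Fin n) (Fin m ⊕ Fin n) ℝ :=
  Matrix.of fun i j =>
    if i = j then
      (match i with
       | Sum.inl a => if a ∈ SM then 1 else 0
       | Sum.inr b => if b ∈ SN then 1 else 0)
    else 0

lemma sum_cubes_eq_trace_pow {n : Type*} [Fintype n] [DecidableEq n]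
    (M : Matrix n n ℝ) (hM : M.IsHermitian) :
    ∑ i, hM.eigenvalues i ^ 3 = (M ^ 3).trace := by
  set U : Matrix n n ℝ := (hM.eigenvectorUnitary : Matrix n n ℝ) with hU
  have hUU : star U * U = 1 := (Matrix.mem_unitaryGroup_iff').mp hM.eigenvectorUnitary.2
  set D : Matrix n n ℝ := diagonal (RCLike.ofReal ∘ hM.eigenvalues) with hD
  have hspec : M = U * D * star U := hM.spectral_theorem
  have h3 : M ^ 3 = U * (D * D * D) * star U := by
    rw [hspec]; rw [pow_succ, pow_two]
    simp only [Matrix.mul_assoc]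
    rw [show star U * (U * (D * (star U * (U * (D * star U))))) =
      star U * U * (D * ((star U * U) * (D * star U))) by simp only [Matrix.mul_assoc]]
    rw [hUU]
    simp [Matrix.mul_assoc]
  rw [h3, Matrix.trace_mul_comm, ← Matrix.mul_assoc, hUU, Matrix.one_mul]
  rw [hD]
  simp [diagonal_mul_diagonal, trace_diagonal, pow_succ, pow_two]


section blocks
variable (m n : ℕ) (SM : Finset (Fin m)) (SN : Finset (Fin n))

noncomputable def dvec : (Fin m ⊕ Fin n) → ℝ :=
  Sum.elim (fun a => if a ∈ SM then 1 else 0) (fun b => if b ∈ SN then 1 else 0)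

lemma loop_eq_diag : loopMatKmn m n SM SN = Matrix.diagonal (dvec m n SM SN) := by
  ext i j
  rcases i with a | b <;> rcases j with a' | b' <;>
    simp [loopMatKmn, dvec, Matrix.diagonal, Matrix.of_apply]

lemma J_idem : loopMatKmn m n SM SN * loopMatKmn m n SM SN = loopMatKmn m n SM SN := by
  rw [loop_eq_diag, diagonal_mul_diagonal]
  have h : ∀ i, dvec m n SM SN i * dvec m n SM SN i = dvec m n SM SN i := by
    rintro (a | b) <;> simp [dvec] <;> split <;> simp_all
  simp only [h]

lemma trace_J : (loopMatKmn m n SM SN).trace = (SM.card : ℝ) + SN.card := by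
  rw [loop_eq_diag, trace_diagonal]
  rw [Fintype.sum_sum_type]
  simp [dvec, Finset.sum_boole]

lemma adj_diag (i) : adjKmn m n i i = 0 := by rcases i with a | b <;> rfl

lemma trace_AJ : (adjKmn m n * loopMatKmn m n SM SN).trace = 0 := by
  rw [loop_eq_diag]
  simp [Matrix.trace, Matrix.diag, Matrix.mul_diagonal, adj_diag]

lemma adj_sq_diag (i) : (adjKmn m n * adjKmn m n) i i =
    Sum.elim (fun _ => (n : ℝ)) (fun _ => (m : ℝ)) i := by
  rcases i with a | b <;>
    simp [Matrix.mul_apply, adjKmn, Fintype.sum_sum_type]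

lemma trace_AAJ : (adjKmn m n * adjKmn m n * loopMatKmn m n SM SN).trace =
    (n : ℝ) * SM.card + (m : ℝ) * SN.card := by
  rw [loop_eq_diag]
  simp only [Matrix.trace, Matrix.diag, Matrix.mul_diagonal]
  rw [Fintype.sum_sum_type]
  simp [adj_sq_diag, dvec, Finset.sum_boole, mul_comm]

lemma trace_AAA : (adjKmn m n * adjKmn m n * adjKmn m n).trace = 0 := by
  simp only [Matrix.trace, Matrix.diag, Matrix.mul_apply]
  rw [Fintype.sum_sum_type]
  simp [adjKmn, Fintype.sum_sum_type, Finset.sum_mul, Finset.mul_sum]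

end blocks

theorem trace_cube (m n : ℕ) (SM : Finset (Fin m)) (SN : Finset (Fin n)) :
    ((adjKmn m n + loopMatKmn m n SM SN) ^ 3).trace =
      3 * ((m : ℝ) * SN.card + (n : ℝ) * SM.card) + ((SM.card : ℝ) + SN.card) := by
  set A := adjKmn m n with hA
  set J := loopMatKmn m n SM SN with hJ
  have hexp : (A + J) ^ 3 = A*A*A + A*A*J + A*J*A + A*J*J + J*(A*A) + J*A*J + J*J*A + J*J*J := by
    noncomm_ring
  rw [hexp]
  simp only [Matrix.trace_add]
  have h1 : (A*J*A).trace = (A*A*J).trace := by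
    rw [Matrix.trace_mul_comm, ← Matrix.mul_assoc]
  have h2 : (J*(A*A)).trace = (A*A*J).trace := by rw [Matrix.trace_mul_comm]
  have h3 : A*J*J = A*J := by rw [Matrix.mul_assoc, J_idem]
  have h4 : (J*A*J).trace = (A*J).trace := by
    rw [Matrix.trace_mul_comm, ← Matrix.mul_assoc, J_idem, Matrix.trace_mul_comm]
  have h5 : J*J*A = J*A := by rw [J_idem]
  have h6 : J*J*J = J := by rw [J_idem, J_idem]
  have h7 : (J*A).trace = (A*J).trace := Matrix.trace_mul_comm _ _
  rw [h1, h2, h3, h4, h5, h6, h7, trace_AAA, trace_AAJ, trace_AJ, trace_J]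
  ring


/-- the sum of cubes of the eigenvalues of `(K_{m,n})_S` equals
`3(mσ_N + nσ_M) + σ` where `σ = σ_M + σ_N`. -/
theorem sum_cubes_eigenvalues_Kmn (m n : ℕ)
    (SM : Finset (Fin m)) (SN : Finset (Fin n))
    (hA : (adjKmn m n + loopMatKmn m n SM SN).IsHermitian) :
    (∑ i, (hA.eigenvalues i) ^ 3) =
      3 * ((m : ℝ) * SN.card + (n : ℝ) * SM.card) + ((SM.card : ℝ) + SN.card) := by
  rw [sum_cubes_eq_trace_pow _ hA, trace_cube]
end

section
/- Let G = K_{m,n} with 0 < σ < m loops, all placed within the part M of size m. Then the nonzero, non-one eigenvalues of G_S are exactly the three roots of p(λ) = λ³ − λ² − mnλ + n(m−σ), each simple, and these three roots lie in the intervals (−∞,0), (0,1), and (1,∞) respectively; the remaining eigenvalues are 1 with multiplicity σ−1 and 0 with multiplicity m+n−σ−2. -/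
/-!
Away from `x ∈ {0, 1}` the matrix `x • 1 - A` is a block matrix whose lower-right block `x • 1`
is invertible, and its Schur complement is a diagonal matrix minus the constant matrix `n / x`,
whose determinant the matrix determinant lemma gives. This identifies the characteristic
polynomial as `X ^ (m + n - σ - 2) * (X - 1) ^ (σ - 1) * p`. Since `p 0 = n (m - σ) > 0`,
`p 1 = -n σ < 0` and `p` is a monic cubic, the intermediate value theorem puts one root of `p` in
each of `(-∞, 0)`, `(0, 1)` and `(1, ∞)`, and these are all its roots.
-/

open Matrix Finset

/-- The diagonal 0-1 matrix indicating loops at `SM ⊆ M` (all loops within the part `M`). -/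
def loopMatSM (m n : ℕ) (SM : Finset (Fin m)) :
    Matrix (Fin m ⊕ Fin n) (Fin m ⊕ Fin n) ℝ :=
  Matrix.of fun i j =>
    match i, j with
    | Sum.inl a, Sum.inl b => if a = b ∧ a ∈ SM then 1 else 0
    | _, _ => 0

open Polynomial

theorem Matrix.det_diagonal_sub_of_const {ι K : Type*} [Fintype ι] [DecidableEq ι] [Field K]
    {d : ι → K} (hd : ∀ i, d i ≠ 0) (c : K) :
    (diagonal d - of fun _ _ => c).det = (∏ i, d i) * (1 - c * ∑ i, (d i)⁻¹) := by
  have hfactor : diagonal d - of (fun _ _ => c) =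
      diagonal d * (1 + vecMulVec (fun i => -c / d i) 1) := by
    ext i j
    obtain rfl | hij := eq_or_ne i j <;>
      simp [*, mul_add, mul_div_cancel₀ _ (hd _), sub_eq_add_neg]
  rw [hfactor, det_mul, det_diagonal, vecMulVec_eq Unit, det_one_add_replicateCol_mul_replicateRow]
  simp [dotProduct, div_eq_mul_inv, mul_sum, sub_eq_add_neg]

theorem Matrix.det_fromBlocks_diagonal_of_const_scalar {m n K : Type*} [Fintype m] [Fintype n]
    [DecidableEq m] [DecidableEq n] [Field K] {d : m → K} (hd : ∀ i, d i ≠ 0) {x : K}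
    (hx : x ≠ 0) (b c : K) :
    (fromBlocks (diagonal d) (of fun _ _ => b) (of fun _ _ => c) (scalar n x)).det =
      x ^ Fintype.card n * ((∏ i, d i) * (1 - b * c * Fintype.card n / x * ∑ i, (d i)⁻¹)) := by
  let : Invertible (scalar n x) := (invertibleOfNonzero hx).map (scalar n)
  have hschur : (of fun _ _ => b : Matrix m n K) * ⅟(scalar n x) *
      (of fun _ _ => c : Matrix n m K) = of fun _ _ => b * c * Fintype.card n / x := by
    rw [invOf_eq_right_inv (by rw [← map_mul, mul_inv_cancel₀ hx, map_one] :
      scalar n x * scalar n x⁻¹ = 1)]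
    ext i j
    simp only [scalar_apply, mul_apply, of_apply, diagonal_apply, mul_ite, mul_zero, sum_ite_eq',
      mem_univ, if_true, sum_const, card_univ, nsmul_eq_mul]
    ring
  rw [det_fromBlocks₂₂, hschur, det_diagonal_sub_of_const hd]
  simp

theorem exists_roots_cubic_eq_of_pos_of_lt {a b : ℝ} (hb : 0 < b) (hba : b < a) :
    ∃ l₁ l₂ l₃ : ℝ, l₁ < 0 ∧ 0 < l₂ ∧ l₂ < 1 ∧ 1 < l₃ ∧
      (X ^ 3 - X ^ 2 - C a * X + C b : ℝ[X]).roots = {l₁, l₂, l₃} := by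
  set p : ℝ[X] := X ^ 3 - X ^ 2 - C a * X + C b
  have hp : Continuous fun x => p.eval x := p.continuous
  have h0 : 0 < p.eval 0 := by simp [p, hb]
  have h1 : p.eval 1 < 0 := by
    simp only [p, eval_add, eval_sub, eval_mul, eval_pow, eval_C, eval_X]; linarith
  -- `p (-(a + 1)) = b - (a + 1) ^ 3 - (a + 1)` and `p (a + 1) = (a + 1) * a ^ 2 + b`
  have hneg : p.eval (-(a + 1)) < 0 := by
    simp only [p, eval_add, eval_sub, eval_mul, eval_pow, eval_C, eval_X]; nlinarith
  have hpos : 0 < p.eval (a + 1) := by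
    simp only [p, eval_add, eval_sub, eval_mul, eval_pow, eval_C, eval_X]
    nlinarith [mul_pos (by linarith : 0 < a + 1) (by nlinarith : 0 < a ^ 2)]
  obtain ⟨l₁, ⟨-, hl₁⟩, hr₁⟩ := intermediate_value_Ioo (by linarith) hp.continuousOn ⟨hneg, h0⟩
  obtain ⟨l₂, ⟨hl₂, hl₂'⟩, hr₂⟩ := intermediate_value_Ioo' zero_le_one hp.continuousOn ⟨h1, h0⟩
  obtain ⟨l₃, ⟨hl₃, -⟩, hr₃⟩ := intermediate_value_Ioo (by linarith) hp.continuousOn ⟨h1, hpos⟩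
  have h12 : l₁ ≠ l₂ := by linarith
  have h13 : l₁ ≠ l₃ := by linarith
  have h23 : l₂ ≠ l₃ := by linarith
  refine ⟨l₁, l₂, l₃, hl₁, hl₂, hl₂', hl₃, ?_⟩
  have hval : ({l₁, l₂, l₃} : Finset ℝ).val = {l₁, l₂, l₃} := by
    rw [Finset.insert_val_of_notMem (by simp [h12, h13]),
      Finset.insert_val_of_notMem (by simp [h23])]
    rfl
  rw [← hval]
  refine roots_eq_of_natDegree_le_card_of_ne_zero ?_ ?_ fun h => by simp [h] at h0
  · simp only [Finset.mem_insert, Finset.mem_singleton]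
    rintro x (rfl | rfl | rfl) <;> assumption
  · rw [Finset.card_eq_three.mpr ⟨l₁, l₂, l₃, h12, h13, h23, rfl⟩]
    simp only [p]
    compute_degree

section CompleteBipartiteWithLoops

variable (m n : ℕ) (SM : Finset (Fin m))

lemma scalar_sub_adjKmn_add_loopMatSM (x : ℝ) :
    scalar _ x - (adjKmn m n + loopMatSM m n SM) =
      fromBlocks (diagonal fun i => if i ∈ SM then x - 1 else x) (of fun _ _ => -1)
        (of fun _ _ => -1) (scalar (Fin n) x) := by
  ext (i | i) (j | j)
  · obtain rfl | hij := eq_or_ne i j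
    · by_cases hi : i ∈ SM <;> simp [adjKmn, loopMatSM, hi]
    · simp [adjKmn, loopMatSM, hij]
  all_goals simp [adjKmn, loopMatSM, diagonal_apply]

lemma eval_charpoly_adjKmn_add_loopMatSM {x : ℝ} (hx₀ : x ≠ 0) (hx₁ : x ≠ 1) :
    (adjKmn m n + loopMatSM m n SM).charpoly.eval x =
      x ^ n * ((x - 1) ^ #SM * x ^ (m - #SM) *
        (1 - n / x * (#SM / (x - 1) + (m - #SM : ℕ) / x))) := by
  have hd : ∀ i, (if i ∈ SM then x - 1 else x) ≠ 0 := fun i => by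
    split_ifs
    exacts [sub_ne_zero.2 hx₁, hx₀]
  rw [eval_charpoly, scalar_sub_adjKmn_add_loopMatSM,
    det_fromBlocks_diagonal_of_const_scalar hd hx₀, Fintype.card_fin]
  have hcompl : #{i | i ∉ SM} = m - #SM := by
    rw [filter_not, filter_univ_mem, ← compl_eq_univ_sdiff, card_compl, Fintype.card_fin]
  simp [prod_ite, sum_ite, apply_ite (·⁻¹), hcompl, div_eq_mul_inv]

lemma charpoly_adjKmn_add_loopMatSM (hn : 0 < n) (h0 : 0 < #SM) (h1 : #SM < m) :
    (adjKmn m n + loopMatSM m n SM).charpoly =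
      (X - C 1) ^ (#SM - 1) * X ^ (m + n - #SM - 2) *
        (X ^ 3 - X ^ 2 - C ((m : ℝ) * n) * X + C ((n : ℝ) * (m - #SM))) := by
  refine eq_of_infinite_eval_eq _ _ ((Set.toFinite {0, 1}).infinite_compl.mono fun x hx => ?_)
  simp only [Set.mem_compl_iff, Set.mem_insert_iff, Set.mem_singleton_iff, not_or] at hx
  obtain ⟨hx₀, hx₁⟩ := hx
  rw [Set.mem_ofPred_eq, eval_charpoly_adjKmn_add_loopMatSM m n SM hx₀ hx₁]
  obtain ⟨s, hs⟩ : ∃ s, #SM = s + 1 := ⟨#SM - 1, by omega⟩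
  obtain ⟨k, hk⟩ : ∃ k, m - #SM = k + 1 := ⟨m - #SM - 1, by omega⟩
  obtain ⟨j, rfl⟩ : ∃ j, n = j + 1 := ⟨n - 1, by omega⟩
  have hexp : m + (j + 1) - #SM - 2 = k + j := by omega
  have hm : (m : ℝ) = s + 1 + (k + 1) := by exact_mod_cast (by omega : m = s + 1 + (k + 1))
  have hx₁' : x - 1 ≠ 0 := sub_ne_zero.2 hx₁
  simp only [eval_mul, eval_pow, eval_sub, eval_add, eval_X, eval_C]
  rw [hexp, hk, hm, hs]
  push_cast
  field_simp
  ring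

lemma roots_charpoly_adjKmn_add_loopMatSM (hn : 0 < n) (h0 : 0 < #SM) (h1 : #SM < m) :
    (adjKmn m n + loopMatSM m n SM).charpoly.roots =
      Multiset.replicate (#SM - 1) 1 + Multiset.replicate (m + n - #SM - 2) 0 +
        (X ^ 3 - X ^ 2 - C ((m : ℝ) * n) * X + C ((n : ℝ) * (m - #SM))).roots := by
  have hne := (charpoly_monic (adjKmn m n + loopMatSM m n SM)).ne_zero
  rw [charpoly_adjKmn_add_loopMatSM m n SM hn h0 h1] at hne ⊢
  rw [roots_mul hne, roots_mul (left_ne_zero_of_mul hne), roots_pow, roots_pow, roots_X_sub_C,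
    roots_X, Multiset.nsmul_singleton, Multiset.nsmul_singleton]

end CompleteBipartiteWithLoops

theorem spec_Kmn_loops_in_M_general (m n : ℕ) (hn : 0 < n)
    (SM : Finset (Fin m)) (h0 : 0 < SM.card) (h1 : SM.card < m)
    (hA : (adjKmn m n + loopMatSM m n SM).IsHermitian) :
    ∃ l1 l2 l3 : ℝ,
      l1 < 0 ∧ 0 < l2 ∧ l2 < 1 ∧ 1 < l3 ∧
      (∀ l ∈ ({l1, l2, l3} : Set ℝ),
        l ^ 3 - l ^ 2 - (m : ℝ) * n * l + (n : ℝ) * ((m : ℝ) - SM.card) = 0) ∧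
      Finset.univ.val.map hA.eigenvalues =
        Multiset.replicate (SM.card - 1) (1 : ℝ) +
        Multiset.replicate (m + n - SM.card - 2) (0 : ℝ) +
        {l1, l2, l3} := by
  have hn' : (0 : ℝ) < n := by exact_mod_cast hn
  have hσ : (0 : ℝ) < #SM := by exact_mod_cast h0
  have hσm : (#SM : ℝ) < m := by exact_mod_cast h1
  obtain ⟨l1, l2, l3, hl1, hl2, hl2', hl3, hroots⟩ :=
    exists_roots_cubic_eq_of_pos_of_lt (a := m * n) (b := n * (m - #SM))
      (mul_pos hn' (sub_pos.2 hσm)) (by nlinarith)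
  refine ⟨l1, l2, l3, hl1, hl2, hl2', hl3, fun l hl => ?_, ?_⟩
  · have hmem : l ∈ (X ^ 3 - X ^ 2 - C ((m : ℝ) * n) * X + C ((n : ℝ) * (m - #SM))).roots := by
      rw [hroots]; simpa using hl
    simpa using (mem_roots'.1 hmem).2
  · rw [← hroots, ← roots_charpoly_adjKmn_add_loopMatSM m n SM hn h0 h1,
      hA.roots_charpoly_eq_eigenvalues, RCLike.ofReal_real_eq_id, Function.id_comp]

/-- for `0 < σ < m`, the spectrum of `(K_{m,n})_S` with all `σ` loops inside `M`
consists of `1` with multiplicity `σ - 1`, `0` with multiplicity `m + n - σ - 2`, and the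
three simple roots of `p(λ) = λ³ − λ² − mnλ + n(m − σ)`, lying in `(−∞,0)`, `(0,1)` and
`(1,∞)` respectively. -/
theorem spec_Kmn_loops_in_M (m n : ℕ) (hm : 2 ≤ m) (hn : 0 < n)
    (SM : Finset (Fin m)) (h0 : 0 < SM.card) (h1 : SM.card < m)
    (hA : (adjKmn m n + loopMatSM m n SM).IsHermitian) :
    ∃ l1 l2 l3 : ℝ,
      l1 < 0 ∧ 0 < l2 ∧ l2 < 1 ∧ 1 < l3 ∧
      (∀ l ∈ ({l1, l2, l3} : Set ℝ),
        l ^ 3 - l ^ 2 - (m : ℝ) * n * l + (n : ℝ) * ((m : ℝ) - SM.card) = 0) ∧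
      Finset.univ.val.map hA.eigenvalues =
        Multiset.replicate (SM.card - 1) (1 : ℝ) +
        Multiset.replicate (m + n - SM.card - 2) (0 : ℝ) +
        {l1, l2, l3} :=
  spec_Kmn_loops_in_M_general m n hn SM h0 h1 hA
end

section
/- Let G be a graph with self-loops of order n whose eigenvalues are all strictly positive. Then G is the disjoint union of n copies of K_1 with a loop attached; equivalently, the adjacency matrix of G is the identity matrix I_n. -/
/-!
All eigenvalues being positive, the adjacency matrix `A` is positive definite. Its entries
lie in `{0, 1}`, so its positive diagonal entries are all `1`; the positive `2 × 2` principal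
minors `A i i * A j j - A i j ^ 2 = 1 - A i j ^ 2` then rule out `A i j = 1` off the diagonal.
-/

open Matrix Finset

namespace Matrix.PosDef

variable {ι : Type*} {A : Matrix ι ι ℝ}

theorem apply_sq_lt_apply_mul_apply (hA : A.PosDef) {i j : ι} (hij : i ≠ j) :
    A i j ^ 2 < A i i * A j j := by
  have hinj : Function.Injective ![i, j] := by
    intro a b
    fin_cases a <;> fin_cases b <;> simp [hij, hij.symm]
  have hdet := (hA.submatrix hinj).det_pos
  have hsymm : A j i = A i j := by simpa using congrFun (congrFun hA.isHermitian.eq i) j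
  rw [det_fin_two] at hdet
  simp only [submatrix_apply, Matrix.cons_val_zero, Matrix.cons_val_one, hsymm] at hdet
  linarith

theorem eq_one_of_forall_eq_zero_or_eq_one [DecidableEq ι] (hA : A.PosDef)
    (h01 : ∀ i j, A i j = 0 ∨ A i j = 1) : A = 1 := by
  have hdiag (i : ι) : A i i = 1 := (h01 i i).resolve_left hA.diag_pos.ne'
  ext i j
  rcases eq_or_ne i j with rfl | hij
  · rw [hdiag, one_apply_eq]
  · have hlt : A i j ^ 2 < 1 := by simpa [hdiag] using hA.apply_sq_lt_apply_mul_apply hij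
    rw [one_apply_ne hij]
    exact (h01 i j).resolve_right fun h => by simp [h] at hlt

end Matrix.PosDef

theorem SimpleGraph.adjMatrix_add_loopMat_apply_eq_zero_or_eq_one {n : ℕ}
    (G : SimpleGraph (Fin n)) [DecidableRel G.Adj] (S : Finset (Fin n)) (i j : Fin n) :
    (G.adjMatrix ℝ + loopMat n S) i j = 0 ∨ (G.adjMatrix ℝ + loopMat n S) i j = 1 := by
  rcases eq_or_ne i j with rfl | hij
  · by_cases hi : i ∈ S <;> simp [loopMat, hi]
  · by_cases hadj : G.Adj i j <;> simp [loopMat, hij, hadj]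

/-- a self-loop graph all of whose eigenvalues are strictly positive is the
disjoint union of `n` copies of `K₁` with a loop, i.e. its adjacency matrix is `I_n`. -/
theorem pos_eigenvalues_iff_identity (n : ℕ) (G : SimpleGraph (Fin n)) [DecidableRel G.Adj]
    (S : Finset (Fin n))
    (hA : (G.adjMatrix ℝ + loopMat n S).IsHermitian)
    (hpos : ∀ i, 0 < hA.eigenvalues i) :
    G.adjMatrix ℝ + loopMat n S = 1 :=
  (hA.posDef_iff_eigenvalues_pos.mpr hpos).eq_one_of_forall_eq_zero_or_eq_one
    (G.adjMatrix_add_loopMat_apply_eq_zero_or_eq_one S)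
end

section
/- Let G be a graph with self-loops of order n whose eigenvalues are all nonnegative. Then every connected component of G is either an isolated vertex K_1 (no loop) or a complete graph K_r with a loop at every vertex, for some r ≥ 1. -/
/-!
A matrix with nonnegative eigenvalues is positive semidefinite, so all its principal minors are
nonnegative. On an edge `uv` of `G` with no loop at `u` the `2 × 2` principal minor is
`0 * a_vv - 1 = -1`, so every non-isolated vertex carries a loop. Then on an induced path
`u - v - w` the `3 × 3` principal minor is `det !![1, 1, 0; 1, 1, 1; 0, 1, 1] = -1`, so adjacency
is transitive on distinct vertices and each component is a clique.
-/

open Matrix Finset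

theorem SimpleGraph.Reachable.adj_of_ne {V : Type*} {G : SimpleGraph V}
    (htrans : ∀ u v w, G.Adj u v → G.Adj v w → u ≠ w → G.Adj u w) {u v : V}
    (h : G.Reachable u v) (huv : u ≠ v) : G.Adj u v := by
  obtain ⟨p⟩ := h
  induction p with
  | nil => exact absurd rfl huv
  | @cons u w v hadj _ ih =>
    by_cases hwv : w = v
    · exact hwv ▸ hadj
    · exact htrans u w v hadj (ih hwv) huv

section LoopGraph

variable {n : ℕ} {G : SimpleGraph (Fin n)} [DecidableRel G.Adj] {S : Finset (Fin n)}

lemma mem_of_adj_of_posSemidef (hpsd : (G.adjMatrix ℝ + loopMat n S).PosSemidef) {u v : Fin n}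
    (huv : G.Adj u v) : u ∈ S := by
  by_contra hu
  have hminor : (G.adjMatrix ℝ + loopMat n S).submatrix ![u, v] ![u, v] =
      !![0, 1; 1, (G.adjMatrix ℝ + loopMat n S) v v] := by
    ext i j
    fin_cases i <;> fin_cases j <;> simp [loopMat, huv, huv.symm, huv.ne', hu]
  have hdet := (hpsd.submatrix ![u, v]).det_nonneg
  rw [hminor, det_fin_two_of] at hdet
  norm_num at hdet

lemma adj_trans_of_posSemidef (hpsd : (G.adjMatrix ℝ + loopMat n S).PosSemidef) {u v w : Fin n}
    (huv : G.Adj u v) (hvw : G.Adj v w) (huw : u ≠ w) : G.Adj u w := by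
  by_contra h
  have hminor : (G.adjMatrix ℝ + loopMat n S).submatrix ![u, v, w] ![u, v, w] =
      !![1, 1, 0; 1, 1, 1; 0, 1, 1] := by
    have hwu : ¬G.Adj w u := fun hwu => h hwu.symm
    ext i j
    fin_cases i <;> fin_cases j <;>
      simp [loopMat, huv, huv.symm, hvw, hvw.symm, huv.ne, huv.ne', hvw.ne, hvw.ne', huw,
        huw.symm, h, hwu, mem_of_adj_of_posSemidef hpsd huv, mem_of_adj_of_posSemidef hpsd hvw,
        mem_of_adj_of_posSemidef hpsd hvw.symm]
  have hpath : det !![(1 : ℝ), 1, 0; 1, 1, 1; 0, 1, 1] = -1 := by simp [det_fin_three]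
  have hdet := (hpsd.submatrix ![u, v, w]).det_nonneg
  rw [hminor, hpath] at hdet
  norm_num at hdet

end LoopGraph

/-- if every eigenvalue of the self-loop graph `G_S` is nonnegative, then every
connected component is either an isolated vertex without a loop, or a complete graph with a
loop at every vertex.  Equivalently: any two distinct vertices in the same component are
adjacent, and every non-isolated vertex carries a loop. -/
theorem nonneg_eigenvalues_components (n : ℕ) (G : SimpleGraph (Fin n)) [DecidableRel G.Adj]
    (S : Finset (Fin n))
    (hA : (G.adjMatrix ℝ + loopMat n S).IsHermitian)
    (hpos : ∀ i, 0 ≤ hA.eigenvalues i) :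
    (∀ u v : Fin n, G.Reachable u v → u ≠ v → G.Adj u v) ∧
    (∀ u v : Fin n, G.Adj u v → u ∈ S) := by
  have hpsd := hA.posSemidef_iff_eigenvalues_nonneg.mpr hpos
  exact ⟨fun u v hreach huv => hreach.adj_of_ne (fun _ _ _ => adj_trans_of_posSemidef hpsd) huv,
    fun _ _ => mem_of_adj_of_posSemidef hpsd⟩
end

section
/- Let G be a bipartite graph of order n and S ⊆ V(G). If λ₁ ≥ ⋯ ≥ λ_n are the eigenvalues of the self-loop graph G_S, then the eigenvalues of G_{V(G)∖S} (loops at the complementary vertex set) are exactly 1 − λ_n ≥ ⋯ ≥ 1 − λ₁. -/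
/-!
Colour the bipartite graph `G` by `Fin 2` and let `D` be the diagonal `±1` signature matrix of
the colouring. Conjugation by `D` negates `A(G)` and fixes every diagonal matrix, and
`J_S + J_{V∖S} = I`, so `D (I - (A(G) + J_S)) D = A(G) + J_{V∖S}`. Hence `A(G) + J_{V∖S}` has
the characteristic polynomial of `I - (A(G) + J_S)`, whose roots are the `1 - λᵢ` by the
spectral theorem.
-/

open Matrix Finset

open Polynomial

lemma Matrix.charpoly_conj_of_mul_self_eq_one {n R : Type*} [Fintype n] [DecidableEq n]
    [CommRing R] {P : Matrix n n R} (hP : P * P = 1) (M : Matrix n n R) :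
    (P * M * P).charpoly = M.charpoly := by
  rw [mul_assoc, charpoly_mul_comm, mul_assoc, hP, mul_one]

namespace Matrix.IsHermitian

variable {𝕜 n : Type*} [RCLike 𝕜] [Fintype n] [DecidableEq n] {A : Matrix n n 𝕜}

lemma charpoly_one_sub (hA : A.IsHermitian) :
    (1 - A).charpoly = ∏ i, (X - C ((1 - hA.eigenvalues i : ℝ) : 𝕜)) := by
  have hA' : IsSelfAdjoint A := hA
  rw [← hA.charpoly_cfc_eq, cfc_sub _ _ A, cfc_const_one ℝ A, cfc_id' ℝ A]

lemma roots_charpoly_one_sub (hA : A.IsHermitian) :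
    (1 - A).charpoly.roots = univ.val.map fun i => ((1 - hA.eigenvalues i : ℝ) : 𝕜) := by
  rw [hA.charpoly_one_sub, roots_prod _ _ (prod_ne_zero_iff.mpr fun i _ => X_sub_C_ne_zero _)]
  simp only [roots_X_sub_C, Multiset.bind_singleton]

end Matrix.IsHermitian

namespace SimpleGraph.Coloring

variable {V R : Type*} [Fintype V] [DecidableEq V] [CommRing R] {G : SimpleGraph V}

def signMatrix (c : G.Coloring (Fin 2)) : Matrix V V R :=
  diagonal fun v => if c v = 0 then 1 else -1

lemma signMatrix_mul_self (c : G.Coloring (Fin 2)) :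
    c.signMatrix * c.signMatrix = (1 : Matrix V V R) := by
  rw [signMatrix, diagonal_mul_diagonal, ← diagonal_one]
  congr 1
  ext v
  split_ifs <;> simp

lemma signMatrix_mul_diagonal_mul_signMatrix (c : G.Coloring (Fin 2)) (d : V → R) :
    c.signMatrix * diagonal d * c.signMatrix = diagonal d := by
  rw [signMatrix, diagonal_mul_diagonal, diagonal_mul_diagonal]
  congr 1
  ext v
  split_ifs <;> simp

lemma signMatrix_mul_adjMatrix_mul_signMatrix [DecidableRel G.Adj] (c : G.Coloring (Fin 2)) :
    c.signMatrix * G.adjMatrix R * c.signMatrix = -G.adjMatrix R := by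
  ext v w
  rw [signMatrix, mul_diagonal, diagonal_mul, neg_apply]
  by_cases hvw : G.Adj v w
  · have hc : c v ≠ c w := c.valid hvw
    generalize c v = a at hc
    generalize c w = b at hc
    fin_cases a <;> fin_cases b <;> simp_all
  · simp [hvw]

end SimpleGraph.Coloring

lemma loopMat_eq_diagonal (n : ℕ) (S : Finset (Fin n)) :
    loopMat n S = diagonal fun i => if i ∈ S then 1 else 0 := by
  ext i j
  by_cases hij : i = j
  · subst hij; simp [loopMat]
  · simp [loopMat, hij]

lemma loopMat_add_loopMat_compl (n : ℕ) (S : Finset (Fin n)) :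
    loopMat n S + loopMat n Sᶜ = 1 := by
  rw [loopMat_eq_diagonal, loopMat_eq_diagonal, diagonal_add, ← diagonal_one]
  congr 1
  ext i
  by_cases hi : i ∈ S <;> simp [hi]

lemma SimpleGraph.Coloring.signMatrix_conj_one_sub_adjMatrix_add_loopMat {n : ℕ}
    {G : SimpleGraph (Fin n)} [DecidableRel G.Adj] (c : G.Coloring (Fin 2)) (S : Finset (Fin n)) :
    c.signMatrix * (1 - (G.adjMatrix ℝ + loopMat n S)) * c.signMatrix =
      G.adjMatrix ℝ + loopMat n Sᶜ := by
  have hJ := c.signMatrix_mul_diagonal_mul_signMatrix (fun i => if i ∈ S then (1 : ℝ) else 0)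
  rw [← loopMat_eq_diagonal] at hJ
  rw [mul_sub, sub_mul, mul_one, c.signMatrix_mul_self, mul_add, add_mul,
    c.signMatrix_mul_adjMatrix_mul_signMatrix, hJ, ← loopMat_add_loopMat_compl n S]
  abel

/-- if `G` is a bipartite graph of order `n` and `S ⊆ V(G)`, then the
multiset of eigenvalues of `G_{V∖S}` is exactly `{1 − λ : λ eigenvalue of G_S}`. -/
theorem bipartite_complement_loops_spectrum (n : ℕ) (G : SimpleGraph (Fin n))
    [DecidableRel G.Adj] (hbip : G.Colorable 2) (S : Finset (Fin n))
    (hA : (G.adjMatrix ℝ + loopMat n S).IsHermitian)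
    (hB : (G.adjMatrix ℝ + loopMat n Sᶜ).IsHermitian) :
    Finset.univ.val.map hB.eigenvalues =
      (Finset.univ.val.map hA.eigenvalues).map (fun x => 1 - x) := by
  obtain ⟨c⟩ := hbip
  have hB_charpoly : (G.adjMatrix ℝ + loopMat n Sᶜ).charpoly =
      (1 - (G.adjMatrix ℝ + loopMat n S)).charpoly := by
    rw [← c.signMatrix_conj_one_sub_adjMatrix_add_loopMat S,
      charpoly_conj_of_mul_self_eq_one c.signMatrix_mul_self]
  have hroots := hB.roots_charpoly_eq_eigenvalues
  rw [hB_charpoly, hA.roots_charpoly_one_sub] at hroots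
  simpa [Multiset.map_map, Function.comp_def] using hroots.symm
end

section
/- Let G_S be a self-loop graph of order n and size m with σ loops. Then 𝓔(G_S) ≤ √(n(2m + σ − σ²/n)). Moreover, if equality holds then G_S is (a,b)-semi-regular with a = 2m/n + 3σ/n − 2σ²/n² − 1 (degrees of loop vertices) and b = 2m/n + σ/n − 2σ²/n² (degrees of non-loop vertices). -/
/-! With `c = σ/n`, the matrix `B = A(G_S) - c I` has eigenvalues `λᵢ - c`, and its diagonal
entries `(B²)ᵢᵢ = dᵢ + (1_S(vᵢ) - c)²` (the squared row norms) sum to `tr B² = 2m + σ - σ²/n`.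
Cauchy–Schwarz gives `Σ |λᵢ - c| ≤ √(n tr B²)`. In the equality case all `(λᵢ - c)²` are equal,
so `B² = (tr B² / n) I`, and reading off its diagonal entries gives the two degrees. -/

open Matrix Finset

section CauchySchwarz

variable {ι : Type*} [Fintype ι]

theorem sum_abs_le_sqrt_card_mul_sum_sq (x : ι → ℝ) :
    ∑ i, |x i| ≤ √(Fintype.card ι * ∑ i, x i ^ 2) := by
  apply Real.le_sqrt_of_sq_le
  simpa [sq_abs] using sq_sum_le_card_mul_sum_sq (s := univ) (f := fun i => |x i|)

theorem eq_sum_div_card_of_sq_sum_eq {y : ι → ℝ}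
    (h : (∑ i, y i) ^ 2 = Fintype.card ι * ∑ i, y i ^ 2) (i : ι) :
    y i = (∑ j, y j) / Fintype.card ι := by
  have hN : (Fintype.card ι : ℝ) ≠ 0 := Nat.cast_ne_zero.mpr (Fintype.card_pos_iff.mpr ⟨i⟩).ne'
  set N : ℝ := (Fintype.card ι : ℝ)
  set s := ∑ j, y j
  -- equality in Cauchy–Schwarz means that `y` has variance zero
  have hvar : ∑ j, (y j - s / N) ^ 2 = 0 := by
    have : ∑ j, (y j - s / N) ^ 2 = ∑ j, y j ^ 2 - 2 * (s / N) * s + N * (s / N) ^ 2 := by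
      simp only [sub_sq, sum_add_distrib, sum_sub_distrib, ← sum_mul, ← mul_sum, sum_const,
        card_univ, nsmul_eq_mul]
      ring
    rw [this]
    field_simp
    linear_combination -h
  have := (sum_eq_zero_iff_of_nonneg fun j _ => sq_nonneg (y j - s / N)).mp hvar i (mem_univ i)
  linarith [pow_eq_zero_iff (n := 2) two_ne_zero |>.mp this]

theorem sq_eq_sum_sq_div_card_of_sum_abs_eq {x : ι → ℝ}
    (h : ∑ i, |x i| = √(Fintype.card ι * ∑ i, x i ^ 2)) (i : ι) :
    x i ^ 2 = (∑ j, x j ^ 2) / Fintype.card ι := by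
  have hN : (Fintype.card ι : ℝ) ≠ 0 := Nat.cast_ne_zero.mpr (Fintype.card_pos_iff.mpr ⟨i⟩).ne'
  have hsq : (∑ i, |x i|) ^ 2 = Fintype.card ι * ∑ i, |x i| ^ 2 := by
    simp only [sq_abs, h]
    exact Real.sq_sqrt (by positivity)
  rw [← sq_abs, eq_sum_div_card_of_sq_sum_eq hsq i, div_pow, hsq, sq]
  simp only [sq_abs]
  field_simp

end CauchySchwarz

theorem sum_ite_mem_sub_card_div_sq {ι : Type*} [Fintype ι] [DecidableEq ι] (S : Finset ι) :
    ∑ i, ((if i ∈ S then 1 else 0) - (#S : ℝ) / Fintype.card ι) ^ 2 =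
      #S - (#S : ℝ) ^ 2 / Fintype.card ι := by
  rcases isEmpty_or_nonempty ι with hι | hι
  · simp [Subsingleton.elim S ∅]
  have hN : (Fintype.card ι : ℝ) ≠ 0 := Nat.cast_ne_zero.mpr Fintype.card_ne_zero
  simp only [sub_sq, ite_pow, one_pow, ne_eq, OfNat.ofNat_ne_zero, not_false_eq_true, zero_pow,
    sum_add_distrib, sum_sub_distrib, ← sum_mul, ← mul_sum, sum_boole, filter_univ_mem, sum_const,
    card_univ, nsmul_eq_mul]
  field_simp
  ring

theorem IsSelfAdjoint.cfc_sub_sq {A : Type*} [Ring A] [StarRing A] [TopologicalSpace A]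
    [Algebra ℝ A] [ContinuousFunctionalCalculus ℝ A IsSelfAdjoint] {a : A} (ha : IsSelfAdjoint a)
    (c : ℝ) : cfc (fun x => (x - c) ^ 2) a = (a - c • 1) * (a - c • 1) := by
  rw [cfc_pow .., cfc_sub .., cfc_id' .., cfc_const .., Algebra.algebraMap_eq_smul_one, sq]

namespace Matrix.IsHermitian

variable {n 𝕜 : Type*} [RCLike 𝕜] [Fintype n] [DecidableEq n] {A : Matrix n n 𝕜}

theorem trace_cfc (hA : A.IsHermitian) (f : ℝ → ℝ) :
    (cfc f A).trace = ∑ i, (f (hA.eigenvalues i) : 𝕜) := by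
  rw [hA.cfc_eq, IsHermitian.cfc, Unitary.conjStarAlgAut_apply, trace_mul_comm, ← mul_assoc,
    Unitary.coe_star_mul_self, one_mul, trace_diagonal]
  rfl

theorem cfc_eq_algebraMap_of_forall_eigenvalues (hA : A.IsHermitian) {f : ℝ → ℝ} {t : ℝ}
    (hf : ∀ i, f (hA.eigenvalues i) = t) : cfc f A = algebraMap ℝ (Matrix n n 𝕜) t := by
  rw [← cfc_const t A hA.isSelfAdjoint]
  refine cfc_congr ?_
  rw [hA.spectrum_real_eq_range_eigenvalues]
  rintro - ⟨i, rfl⟩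
  exact hf i

end Matrix.IsHermitian

namespace SimpleGraph

variable {V R : Type*} [Fintype V] [DecidableEq V] [NonAssocSemiring R] (G : SimpleGraph V)
  [DecidableRel G.Adj]

theorem adjMatrix_add_diagonal_mul_self_apply_self (d : V → R) (v : V) :
    ((G.adjMatrix R + diagonal d) * (G.adjMatrix R + diagonal d)) v v = G.degree v + d v * d v := by
  simp only [add_mul, mul_add, Matrix.add_apply, adjMatrix_mul_self_apply_self, mul_diagonal,
    diagonal_mul, diagonal_mul_diagonal, adjMatrix_apply, G.irrefl, if_false, diagonal_apply_eq,
    mul_zero, zero_mul, add_zero, zero_add]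

theorem trace_adjMatrix_add_diagonal_mul_self (d : V → R) :
    ((G.adjMatrix R + diagonal d) * (G.adjMatrix R + diagonal d)).trace =
      2 * #G.edgeFinset + ∑ v, d v * d v := by
  simp only [trace, Matrix.diag, adjMatrix_add_diagonal_mul_self_apply_self, sum_add_distrib,
    ← Nat.cast_sum, sum_degrees_eq_twice_card_edges, Nat.cast_mul, Nat.cast_ofNat]

end SimpleGraph

theorem adjMatrix_add_loopMat_sub_smul_one {n : ℕ} (G : SimpleGraph (Fin n)) [DecidableRel G.Adj]
    (S : Finset (Fin n)) (c : ℝ) :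
    G.adjMatrix ℝ + loopMat n S - c • 1 =
      G.adjMatrix ℝ + diagonal fun i => (if i ∈ S then 1 else 0) - c := by
  have hS : loopMat n S = diagonal fun i => if i ∈ S then 1 else 0 := by
    ext i j
    by_cases h : i = j <;> simp [loopMat, h]
  rw [hS, add_sub_assoc, smul_one_eq_diagonal, diagonal_sub]

theorem selfLoop_energy_upper_bound_general (n : ℕ) (G : SimpleGraph (Fin n))
    [DecidableRel G.Adj] (S : Finset (Fin n))
    (hA : (G.adjMatrix ℝ + loopMat n S).IsHermitian) :
    (∑ i, |hA.eigenvalues i - (S.card : ℝ) / n|) ≤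
      Real.sqrt ((n : ℝ) * (2 * G.edgeFinset.card + S.card - (S.card : ℝ) ^ 2 / n)) ∧
    ((∑ i, |hA.eigenvalues i - (S.card : ℝ) / n|) =
        Real.sqrt ((n : ℝ) * (2 * G.edgeFinset.card + S.card - (S.card : ℝ) ^ 2 / n)) →
      (∀ v ∈ S, (G.degree v : ℝ) =
          2 * G.edgeFinset.card / n + 3 * S.card / n - 2 * (S.card : ℝ) ^ 2 / (n : ℝ) ^ 2 - 1) ∧
      (∀ v ∉ S, (G.degree v : ℝ) =
          2 * G.edgeFinset.card / n + S.card / n - 2 * (S.card : ℝ) ^ 2 / (n : ℝ) ^ 2)) := by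
  set c : ℝ := #S / n
  set d : Fin n → ℝ := fun i => (if i ∈ S then 1 else 0) - c
  have hB : G.adjMatrix ℝ + loopMat n S - c • 1 = G.adjMatrix ℝ + diagonal d :=
    adjMatrix_add_loopMat_sub_smul_one G S c
  have hq : ∑ i, (hA.eigenvalues i - c) ^ 2 = 2 * #G.edgeFinset + #S - (#S : ℝ) ^ 2 / n := by
    have := hA.trace_cfc fun x => (x - c) ^ 2
    rw [hA.isSelfAdjoint.cfc_sub_sq, hB, G.trace_adjMatrix_add_diagonal_mul_self] at this
    have hd : ∑ i, d i * d i = #S - (#S : ℝ) ^ 2 / n := by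
      simpa [← sq, d, c] using sum_ite_mem_sub_card_div_sq S
    simpa [hd, add_sub_assoc] using this.symm
  have hcs := sum_abs_le_sqrt_card_mul_sum_sq fun i => hA.eigenvalues i - c
  rw [Fintype.card_fin, hq] at hcs
  refine ⟨hcs, fun heq => ?_⟩
  have hconst := sq_eq_sum_sq_div_card_of_sum_abs_eq (x := fun i => hA.eigenvalues i - c)
    (by rwa [Fintype.card_fin, hq])
  simp only [Fintype.card_fin, hq] at hconst
  have hdeg (v : Fin n) : (G.degree v : ℝ) + d v * d v = 
      (2 * #G.edgeFinset + #S - (#S : ℝ) ^ 2 / n) / n := by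
    rw [← G.adjMatrix_add_diagonal_mul_self_apply_self, ← hB, ← hA.isSelfAdjoint.cfc_sub_sq,
      hA.cfc_eq_algebraMap_of_forall_eigenvalues hconst, Algebra.algebraMap_eq_smul_one]
    simp
  refine ⟨fun v hv => ?_, fun v hv => ?_⟩ <;>
  · have hn : (n : ℝ) ≠ 0 := Nat.cast_ne_zero.mpr (Fin.pos v).ne'
    rw [eq_sub_of_add_eq (hdeg v)]
    simp only [d, c, hv, if_true, if_false]
    field_simp
    ring

/-- for a self-loop graph `G_S` of order `n`, size `m` and `σ` loops,
`𝓔(G_S) ≤ √(n(2m + σ − σ²/n))`; moreover if equality holds, then `G_S` is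
`(a,b)`-semi-regular with `a = 2m/n + 3σ/n − 2σ²/n² − 1` on loop vertices and
`b = 2m/n + σ/n − 2σ²/n²` on non-loop vertices. -/
theorem selfLoop_energy_upper_bound (n : ℕ) (hn : 0 < n) (G : SimpleGraph (Fin n))
    [DecidableRel G.Adj] (S : Finset (Fin n))
    (hA : (G.adjMatrix ℝ + loopMat n S).IsHermitian) :
    (∑ i, |hA.eigenvalues i - (S.card : ℝ) / n|) ≤
      Real.sqrt ((n : ℝ) * (2 * G.edgeFinset.card + S.card - (S.card : ℝ) ^ 2 / n)) ∧
    ((∑ i, |hA.eigenvalues i - (S.card : ℝ) / n|) =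
        Real.sqrt ((n : ℝ) * (2 * G.edgeFinset.card + S.card - (S.card : ℝ) ^ 2 / n)) →
      (∀ v ∈ S, (G.degree v : ℝ) =
          2 * G.edgeFinset.card / n + 3 * S.card / n - 2 * (S.card : ℝ) ^ 2 / (n : ℝ) ^ 2 - 1) ∧
      (∀ v ∉ S, (G.degree v : ℝ) =
          2 * G.edgeFinset.card / n + S.card / n - 2 * (S.card : ℝ) ^ 2 / (n : ℝ) ^ 2)) :=
  selfLoop_energy_upper_bound_general n G S hA
end
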